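/- There exists a constant κ₁ > 0, depending only on the cut-off function χ, such that for all t, s ≥ 0 one has ‖u^χ(·,t) − u^χ(·,s)‖²_{L²(ℝ²)} ≤ κ₁ |log((1+t)/(1+s))|. -/

import Mathlib

open MeasureTheory Real
open scoped ENNReal

noncomputable section

abbrev E2 := EuclideanSpace ℝ (Fin 2)

/-- The rotation `x ↦ x^⊥ = (-x₂, x₁)`. -/
noncomputable def perp (x : E2) : E2 :=
  (WithLp.equiv 2 (Fin 2 → ℝ)).symm ![-(x 1), x 0]

/-- The Oseen vortex velocity field `Θ(x,t)`. -/
noncomputable def Theta (t : ℝ) (x : E2) : E2 :=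
  ((1 / (2 * π)) * (1 - Real.exp (-‖x‖ ^ 2 / (4 * (1 + t)))) / ‖x‖ ^ 2) • perp x

/-- The Oseen vorticity `Ξ(x,t)`. -/
noncomputable def Xi (t : ℝ) (x : E2) : ℝ :=
  (1 / (4 * π * (1 + t))) * Real.exp (-‖x‖ ^ 2 / (4 * (1 + t)))

/-- A smooth radially symmetric cut-off function, nondecreasing along rays,
vanishing on `{‖x‖ ≤ ρ}` and equal to `1` on `{‖x‖ ≥ M}`. -/
structure IsCutoff (χ : E2 → ℝ) (ρ M : ℝ) : Prop where
  smooth : ContDiff ℝ (⊤ : ℕ∞) χ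
  mem01 : ∀ x : E2, χ x ∈ Set.Icc (0 : ℝ) 1
  radial_mono : ∀ x y : E2, ‖x‖ ≤ ‖y‖ → χ x ≤ χ y
  zero_near : ∀ x : E2, ‖x‖ ≤ ρ → χ x = 0
  one_far : ∀ x : E2, M ≤ ‖x‖ → χ x = 1
  rho_pos : 0 < ρ
  rho_lt_M : ρ < M

/-- The truncated Oseen vortex `u^χ(x,t) = χ(x) Θ(x,t)`. -/
noncomputable def uchi (χ : E2 → ℝ) (t : ℝ) (x : E2) : E2 := χ x • Theta t x

/-- The Laplacian of a scalar function on `ℝ²`. -/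
noncomputable def lap (f : E2 → ℝ) (x : E2) : ℝ :=
  ∑ i : Fin 2, fderiv ℝ (fun y => fderiv ℝ f y (EuclideanSpace.single i 1)) x
    (EuclideanSpace.single i 1)

/-- The remainder term `R^χ(x,t) = Θ Δχ + 2 ((x·∇χ)/|x|²)(x^⊥ Ξ − Θ)`. -/
noncomputable def Rchi (χ : E2 → ℝ) (t : ℝ) (x : E2) : E2 :=
  lap χ x • Theta t x + (2 * fderiv ℝ χ x x / ‖x‖ ^ 2) • (Xi t x • perp x - Theta t x)

set_option maxHeartbeats 1000000

section AuxProofs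
open Set

lemma lintegral_norm_E2 (f : ℝ → ℝ≥0∞) (hf : Measurable f) :
    ∫⁻ x : E2, f ‖x‖ = (volume : Measure E2).toSphere Set.univ *
      ∫⁻ r in Set.Ioi (0:ℝ), ENNReal.ofReal r * f r := by
  have hdim : Module.finrank ℝ E2 = 2 := finrank_euclideanSpace_fin
  have h1 : ∫⁻ x : ({(0:E2)}ᶜ : Set E2), f ‖(x:E2)‖ ∂((volume : Measure E2).comap (↑))
      = ∫⁻ x : E2, f ‖x‖ := by
    rw [lintegral_subtype_comap (measurableSet_singleton (0:E2)).compl (fun y : E2 => f ‖y‖),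
      MeasureTheory.restrict_compl_singleton]
  have h2 : ∫⁻ x : ({(0:E2)}ᶜ : Set E2), f ‖(x:E2)‖ ∂((volume : Measure E2).comap (↑))
      = ∫⁻ p : Metric.sphere (0:E2) 1 × Set.Ioi (0:ℝ), f p.2
        ∂((volume : Measure E2).toSphere.prod (.volumeIoiPow (Module.finrank ℝ E2 - 1))) := by
    refine Eq.trans ?_ ((volume : Measure E2).measurePreserving_homeomorphUnitSphereProd.lintegral_comp
        (f := fun p : Metric.sphere (0:E2) 1 × Set.Ioi (0:ℝ) => f p.2)
        (hf.comp (measurable_subtype_coe.comp measurable_snd)))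
    simp [homeomorphUnitSphereProd]
  have h3 : ∫⁻ p : Metric.sphere (0:E2) 1 × Set.Ioi (0:ℝ), f p.2
        ∂((volume : Measure E2).toSphere.prod (.volumeIoiPow (Module.finrank ℝ E2 - 1)))
      = (volume : Measure E2).toSphere Set.univ *
        ∫⁻ r : Set.Ioi (0:ℝ), f r ∂(Measure.volumeIoiPow (Module.finrank ℝ E2 - 1)) := by
    rw [MeasureTheory.lintegral_prod (f := fun p : Metric.sphere (0:E2) 1 × Set.Ioi (0:ℝ) => f p.2)
      ((hf.comp (measurable_subtype_coe.comp measurable_snd)).aemeasurable)]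
    simp only
    rw [lintegral_const, mul_comm]
  have h4 : ∫⁻ r : Set.Ioi (0:ℝ), f r ∂(Measure.volumeIoiPow (Module.finrank ℝ E2 - 1))
      = ∫⁻ r in Set.Ioi (0:ℝ), ENNReal.ofReal r * f r := by
    rw [hdim, Measure.volumeIoiPow]
    rw [lintegral_withDensity_eq_lintegral_mul ((volume : Measure ℝ).comap (↑))
      (f := fun r : Set.Ioi (0:ℝ) => ENNReal.ofReal ((r:ℝ) ^ (2-1)))
      (by fun_prop) (g := fun r : Set.Ioi (0:ℝ) => f r) (hf.comp measurable_subtype_coe)]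
    have := lintegral_subtype_comap (μ := (volume : Measure ℝ)) (measurableSet_Ioi (a := (0:ℝ)))
      (fun r : ℝ => ENNReal.ofReal (r ^ (2-1)) * f r)
    rw [show (fun a : Set.Ioi (0:ℝ) => ((fun r : Set.Ioi (0:ℝ) => ENNReal.ofReal ((r:ℝ) ^ (2-1)))
        * fun r : Set.Ioi (0:ℝ) => f r) a) = fun a : Set.Ioi (0:ℝ) =>
        ENNReal.ofReal ((a:ℝ) ^ (2-1)) * f a from rfl, this]
    refine setLIntegral_congr_fun measurableSet_Ioi (fun r hr => ?_)
    norm_num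
  rw [← h1, h2, h3, h4]
set_option maxHeartbeats 1000000

lemma gauss_tail {b : ℝ} (hb : 0 < b) :
    ∫ r in Set.Ioi (0:ℝ), r * Real.exp (-b * r^2) = 1/(2*b) := by
  have hderiv : ∀ x ∈ Set.Ici (0:ℝ),
      HasDerivAt (fun r : ℝ => Real.exp (-b*r^2) * (-(2*b)⁻¹)) (x * Real.exp (-b*x^2)) x := by
    intro x _
    have h1 : HasDerivAt (fun r : ℝ => -b*r^2) (-b*(2*x)) x := by
      simpa using (hasDerivAt_pow 2 x).const_mul (-b)
    have h2 := (h1.exp).mul_const (-(2*b)⁻¹)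
    refine h2.congr_deriv ?_
    field_simp
  have htend : Filter.Tendsto (fun r : ℝ => Real.exp (-b*r^2) * (-(2*b)⁻¹))
      Filter.atTop (nhds 0) := by
    have h3 : Filter.Tendsto (fun r : ℝ => -b*r^2) Filter.atTop Filter.atBot := by
      have := (Filter.tendsto_pow_atTop (two_ne_zero)).const_mul_atTop hb (f := fun r : ℝ => r^2)
      simpa using (Filter.tendsto_neg_atBot_iff.2 this)
    have := (Real.tendsto_exp_atBot.comp h3).mul_const (-(2*b)⁻¹)
    simpa using this
  have := integral_Ioi_of_hasDerivAt_of_tendsto' hderiv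
    ((integrable_mul_exp_neg_mul_sq hb).integrableOn) htend
  rw [this]
  norm_num


lemma key1d {a b : ℝ} (hb : 0 < b) (hba : b ≤ a) :
    ∫⁻ r in Set.Ioi (0:ℝ),
        ENNReal.ofReal ((Real.exp (-b*r^2) - Real.exp (-a*r^2))^2 / r)
      ≤ ENNReal.ofReal (2 * Real.log (a/b)) := by
  have ha : 0 < a := lt_of_lt_of_le hb hba
  set φ : ℝ → ℝ := fun r => Real.exp (-b*r^2) - Real.exp (-a*r^2) with hφdef
  have hab1 : 1 ≤ a/b := (one_le_div hb).2 hba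
  have hlog0 : 0 ≤ Real.log (a/b) := Real.log_nonneg hab1
  -- pointwise facts
  have hφ_nonneg : ∀ r : ℝ, 0 ≤ φ r := by
    intro r
    have : Real.exp (-a*r^2) ≤ Real.exp (-b*r^2) :=
      Real.exp_le_exp.2 (by nlinarith [sq_nonneg r])
    simp only [hφdef]; linarith
  have hφ_le_exp : ∀ r : ℝ, φ r ≤ Real.exp (-b*r^2) := by
    intro r; have := Real.exp_pos (-a*r^2); simp only [hφdef]; linarith
  have hφ_le_one : ∀ r : ℝ, φ r ≤ 1 := by
    intro r
    exact le_trans (hφ_le_exp r) (Real.exp_le_one_iff.2 (by nlinarith [sq_nonneg r]))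
  have hφ_le_lin : ∀ r : ℝ, φ r ≤ (a - b) * r^2 * Real.exp (-b*r^2) := by
    intro r
    have h1 : 1 + (-((a-b)*r^2)) ≤ Real.exp (-((a-b)*r^2)) := by
      have := Real.add_one_le_exp (-((a-b)*r^2)); linarith
    have h2 : Real.exp (-b*r^2) * Real.exp (-((a-b)*r^2)) = Real.exp (-a*r^2) := by
      rw [← Real.exp_add]; ring_nf
    have h3 := mul_le_mul_of_nonneg_left h1 (Real.exp_pos (-b*r^2)).le
    rw [h2] at h3
    simp only [hφdef]
    nlinarith [Real.exp_pos (-b*r^2)]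
  have hφ_le_lin' : ∀ r : ℝ, φ r ≤ (a - b) * r^2 := by
    intro r
    refine le_trans (hφ_le_lin r) ?_
    have h1 : Real.exp (-b*r^2) ≤ 1 := Real.exp_le_one_iff.2 (by nlinarith [sq_nonneg r])
    exact mul_le_of_le_one_right (by nlinarith [sq_nonneg r]) h1
  rcases le_or_gt a (2*b) with hA | hB
  · -- case a ≤ 2b : single global majorant (a-b) * (r * exp (-b r²))
    have hmono : ∫⁻ r in Set.Ioi (0:ℝ), ENNReal.ofReal ((φ r)^2 / r)
        ≤ ∫⁻ r in Set.Ioi (0:ℝ), ENNReal.ofReal ((a-b) * (r * Real.exp (-b*r^2))) := by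
      refine setLIntegral_mono (by fun_prop) (fun r hr => ?_)
      refine ENNReal.ofReal_le_ofReal ?_
      rw [div_le_iff₀ (mem_Ioi.1 hr)]
      have h4 := hφ_le_lin r
      have h5 := hφ_le_one r
      have h6 := hφ_nonneg r
      nlinarith [Real.exp_pos (-b*r^2), sq_nonneg r, mem_Ioi.1 hr]
    refine le_trans hmono ?_
    rw [← MeasureTheory.ofReal_integral_eq_lintegral_ofReal
      (((integrable_mul_exp_neg_mul_sq hb).const_mul (a-b)).integrableOn)
      (by
        filter_upwards [ae_restrict_mem measurableSet_Ioi] with r hr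
        have h0 : (0:ℝ) < r := mem_Ioi.1 hr
        exact mul_nonneg (by linarith) (by positivity))]
    rw [integral_const_mul, gauss_tail hb]
    refine ENNReal.ofReal_le_ofReal ?_
    -- (a-b) * (1/(2b)) ≤ 2 log (a/b), using  (a-b)/a ≤ log (a/b) and a ≤ 2b
    have h1 : Real.log (b/a) ≤ b/a - 1 := Real.log_le_sub_one_of_pos (by positivity)
    have h2 : Real.log (a/b) = - Real.log (b/a) := by
      rw [← Real.log_inv, inv_div]
    have h3 : 1 - b/a ≤ Real.log (a/b) := by rw [h2]; linarith
    have h4 : (a-b) * (1/(2*b)) ≤ 1 - b/a := by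
      rw [show (1:ℝ) - b/a = (a-b)/a by field_simp, mul_one_div,
        div_le_div_iff₀ (by positivity) ha]
      nlinarith
    linarith
  · -- case 2b < a
    set c : ℝ := a - b with hcdef
    have hc0 : 0 < c := by simp only [hcdef]; linarith
    have hbc : b < c := by simp only [hcdef]; linarith
    set R0 : ℝ := (Real.sqrt c)⁻¹ with hR0def
    set R2 : ℝ := (Real.sqrt b)⁻¹ with hR2def
    have hsc : 0 < Real.sqrt c := Real.sqrt_pos.2 hc0
    have hsb : 0 < Real.sqrt b := Real.sqrt_pos.2 hb
    have hR0pos : 0 < R0 := by positivity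
    have hR2pos : 0 < R2 := by positivity
    have hR0R2 : R0 ≤ R2 := by
      apply inv_anti₀ hsb
      exact Real.sqrt_le_sqrt (by linarith)
    set g : ℝ → ℝ≥0∞ := fun r => ENNReal.ofReal ((φ r)^2 / r) with hgdef
    have e1 : ∫⁻ r in Set.Ioi (0:ℝ), g r
        = (∫⁻ r in Set.Ioc 0 R0, g r) + ∫⁻ r in Set.Ioi R0, g r := by
      rw [← lintegral_union measurableSet_Ioi (Set.Ioc_disjoint_Ioi le_rfl),
        Set.Ioc_union_Ioi_eq_Ioi hR0pos.le]
    have e2 : ∫⁻ r in Set.Ioi R0, g r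
        = (∫⁻ r in Set.Ioc R0 R2, g r) + ∫⁻ r in Set.Ioi R2, g r := by
      rw [← lintegral_union measurableSet_Ioi (Set.Ioc_disjoint_Ioi le_rfl),
        Set.Ioc_union_Ioi_eq_Ioi hR0R2]
    -- piece 1
    have p1 : ∫⁻ r in Set.Ioc 0 R0, g r ≤ ENNReal.ofReal (1/4) := by
      have hmono : ∫⁻ r in Set.Ioc 0 R0, g r
          ≤ ∫⁻ r in Set.Ioc 0 R0, ENNReal.ofReal (c^2 * r^3) := by
        refine setLIntegral_mono (by fun_prop) (fun r hr => ?_)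
        refine ENNReal.ofReal_le_ofReal ?_
        have hr0 : 0 < r := hr.1
        rw [div_le_iff₀ hr0]
        have h4 := hφ_le_lin' r
        have h6 := hφ_nonneg r
        nlinarith [sq_nonneg r]
      refine le_trans hmono ?_
      rw [← MeasureTheory.ofReal_integral_eq_lintegral_ofReal
        ((Continuous.integrableOn_Ioc (by continuity)))
        (by
          filter_upwards [ae_restrict_mem measurableSet_Ioc] with r hr
          have : (0:ℝ) < r := hr.1
          positivity)]
      refine ENNReal.ofReal_le_ofReal ?_
      rw [← intervalIntegral.integral_of_le hR0pos.le, intervalIntegral.integral_const_mul,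
        integral_pow]
      have hR04 : R0^(3+1) = (c^2)⁻¹ := by
        rw [hR0def, show 3+1 = 2*2 from rfl, pow_mul, inv_pow, Real.sq_sqrt hc0.le, inv_pow]
      rw [hR04]
      have hc2 : (c:ℝ)^2 ≠ 0 := by positivity
      field_simp
      norm_num
    -- piece 2
    have p2 : ∫⁻ r in Set.Ioc R0 R2, g r ≤ ENNReal.ofReal (Real.log (a/b) / 2) := by
      have hmono : ∫⁻ r in Set.Ioc R0 R2, g r
          ≤ ∫⁻ r in Set.Ioc R0 R2, ENNReal.ofReal (1/r) := by
        refine setLIntegral_mono (by fun_prop) (fun r hr => ?_)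
        refine ENNReal.ofReal_le_ofReal ?_
        have hr0 : 0 < r := lt_trans hR0pos hr.1
        rw [div_le_div_iff₀ hr0 hr0]
        have h5 := hφ_le_one r
        have h6 := hφ_nonneg r
        nlinarith [mul_le_mul_of_nonneg_right (show φ r^2 ≤ 1 by nlinarith) hr0.le]
      refine le_trans hmono ?_
      have hii : IntervalIntegrable (fun r : ℝ => 1/r) volume R0 R2 :=
        intervalIntegral.intervalIntegrable_one_div
          (fun x hx => by
            rcases Set.mem_uIcc.1 hx with h | h
            · exact ne_of_gt (lt_of_lt_of_le hR0pos h.1)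
            · exact ne_of_gt (lt_of_lt_of_le hR2pos h.1))
          continuousOn_id
      rw [← MeasureTheory.ofReal_integral_eq_lintegral_ofReal
        (hii.1)
        (by
          filter_upwards [ae_restrict_mem measurableSet_Ioc] with r hr
          have : (0:ℝ) < r := lt_trans hR0pos hr.1
          positivity)]
      refine ENNReal.ofReal_le_ofReal ?_
      rw [← intervalIntegral.integral_of_le hR0R2, integral_one_div
        (Set.notMem_uIcc_of_lt hR0pos hR2pos)]
      have hlogval : Real.log (R2/R0) = Real.log (c/b) / 2 := by
        rw [hR2def, hR0def, show (√b)⁻¹/(√c)⁻¹ = √c/√b by field_simp,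
          ← Real.sqrt_div hc0.le, Real.log_sqrt (by positivity)]
      rw [hlogval]
      have hlcb : Real.log (c/b) ≤ Real.log (a/b) := by
        apply Real.log_le_log (by positivity)
        gcongr
        simp only [hcdef]; linarith
      linarith
    -- piece 3
    have p3 : ∫⁻ r in Set.Ioi R2, g r ≤ ENNReal.ofReal (1/4) := by
      have hmono : ∫⁻ r in Set.Ioi R2, g r
          ≤ ∫⁻ r in Set.Ioi R2, ENNReal.ofReal (b * (r * Real.exp (-(2*b)*r^2))) := by
        refine setLIntegral_mono (by fun_prop) (fun r hr => ?_)
        refine ENNReal.ofReal_le_ofReal ?_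
        have hr2 : R2 < r := hr
        have hr0 : 0 < r := lt_trans hR2pos hr2
        have hbr2 : 1 ≤ b * r^2 := by
          have h7 : R2^2 ≤ r^2 := by nlinarith
          have h8 : R2^2 = b⁻¹ := by
            rw [hR2def, ← Real.sqrt_inv, Real.sq_sqrt (inv_nonneg.2 hb.le)]
          rw [h8] at h7
          calc (1:ℝ) = b * b⁻¹ := (mul_inv_cancel₀ hb.ne').symm
            _ ≤ b * r^2 := mul_le_mul_of_nonneg_left h7 hb.le
        have hsq : Real.exp (-b*r^2) * Real.exp (-b*r^2) = Real.exp (-(2*b)*r^2) := by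
          rw [← Real.exp_add]; ring_nf
        rw [div_le_iff₀ hr0]
        have h4 := hφ_le_exp r
        have h6 := hφ_nonneg r
        have hE := Real.exp_pos (-b*r^2)
        have hE2 := Real.exp_pos (-(2*b)*r^2)
        have hφsq : (φ r)^2 ≤ Real.exp (-(2*b)*r^2) := by
          rw [← hsq]; nlinarith
        nlinarith
      refine le_trans hmono ?_
      refine le_trans (lintegral_mono_set (Set.Ioi_subset_Ioi hR2pos.le)) ?_
      rw [← MeasureTheory.ofReal_integral_eq_lintegral_ofReal
        (((integrable_mul_exp_neg_mul_sq (by positivity : (0:ℝ) < 2*b)).const_mul b).integrableOn)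
        (by
          filter_upwards [ae_restrict_mem measurableSet_Ioi] with r hr
          have h0 : (0:ℝ) < r := hr
          exact mul_nonneg hb.le (by positivity))]
      refine ENNReal.ofReal_le_ofReal ?_
      rw [integral_const_mul, gauss_tail (by positivity : (0:ℝ) < 2*b)]
      rw [show b * (1/(2*(2*b))) = 1/4 by field_simp; ring]
    -- combine
    rw [e1, e2]
    have hlog2 : Real.log 2 ≤ Real.log (a/b) := by
      apply Real.log_le_log (by norm_num)
      rw [le_div_iff₀ hb]; linarith
    have hl2 : (0.6931471803 : ℝ) < Real.log 2 := Real.log_two_gt_d9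
    calc ((∫⁻ r in Set.Ioc 0 R0, g r) + ((∫⁻ r in Set.Ioc R0 R2, g r) + ∫⁻ r in Set.Ioi R2, g r))
        ≤ ENNReal.ofReal (1/4) + (ENNReal.ofReal (Real.log (a/b)/2) + ENNReal.ofReal (1/4)) := by
          gcongr
      _ = ENNReal.ofReal (1/4 + (Real.log (a/b)/2 + 1/4)) := by
          rw [ENNReal.ofReal_add (by norm_num) (by positivity),
            ENNReal.ofReal_add (by positivity) (by norm_num)]
      _ ≤ ENNReal.ofReal (2 * Real.log (a/b)) := by
          refine ENNReal.ofReal_le_ofReal ?_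
          linarith

lemma norm_perp (x : E2) : ‖perp x‖ = ‖x‖ := by
  rw [EuclideanSpace.norm_eq, EuclideanSpace.norm_eq]
  simp only [perp, WithLp.equiv_symm_apply, PiLp.toLp_apply, WithLp.ofLp_toLp, Fin.sum_univ_two, Matrix.cons_val_zero,
    Matrix.cons_val_one, Matrix.head_cons, Real.norm_eq_abs, sq_abs]
  ring_nf

lemma pointwise_bound (χ : E2 → ℝ) (ρ M : ℝ) (hχ : IsCutoff χ ρ M) (t s : ℝ) (x : E2) :
    ‖uchi χ t x - uchi χ s x‖^2 ≤ (1/(4*π^2)) *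
      ((Real.exp (-(4*(1+t))⁻¹ * ‖x‖^2) - Real.exp (-(4*(1+s))⁻¹ * ‖x‖^2))^2 / ‖x‖^2) := by
  rcases eq_or_ne x 0 with rfl | hx
  · have hperp0 : perp (0 : E2) = 0 := by
      rw [← norm_eq_zero, norm_perp, norm_zero]
    simp [uchi, Theta, hperp0]
  · have hr : 0 < ‖x‖ := norm_pos_iff.2 hx
    have hsub : uchi χ t x - uchi χ s x
        = (χ x * ((1/(2*π)) * (1 - Real.exp (-‖x‖^2/(4*(1+t))))/‖x‖^2)
          - χ x * ((1/(2*π)) * (1 - Real.exp (-‖x‖^2/(4*(1+s))))/‖x‖^2)) • perp x := by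
      simp only [uchi, Theta, smul_smul, ← sub_smul]
    rw [hsub, norm_smul, Real.norm_eq_abs, norm_perp, mul_pow, sq_abs]
    have hexp_t : -‖x‖^2/(4*(1+t)) = -(4*(1+t))⁻¹ * ‖x‖^2 := by ring
    have hexp_s : -‖x‖^2/(4*(1+s)) = -(4*(1+s))⁻¹ * ‖x‖^2 := by ring
    rw [hexp_t, hexp_s]
    set Et := Real.exp (-(4*(1+t))⁻¹ * ‖x‖^2)
    set Es := Real.exp (-(4*(1+s))⁻¹ * ‖x‖^2)
    have key : (χ x * ((1/(2*π)) * (1 - Et)/‖x‖^2) - χ x * ((1/(2*π)) * (1 - Es)/‖x‖^2))^2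
        * ‖x‖^2 = (χ x)^2 * ((1/(4*π^2)) * ((Et - Es)^2 / ‖x‖^2)) := by
      field_simp
      ring
    rw [key]
    have hB : 0 ≤ (1/(4*π^2)) * ((Et - Es)^2 / ‖x‖^2) := by positivity
    have hχ01 := hχ.mem01 x
    have hχ2 : (χ x)^2 ≤ 1 := by nlinarith [hχ01.1, hχ01.2]
    nlinarith [mul_le_mul_of_nonneg_right hχ2 hB]

lemma main_ineq (χ : E2 → ℝ) (ρ M : ℝ) (hχ : IsCutoff χ ρ M) (t s : ℝ) (hs : 0 ≤ s)
    (hst : s ≤ t) :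
    (eLpNorm (fun x => uchi χ t x - uchi χ s x) 2 volume) ^ 2 ≤
      ENNReal.ofReal ((((volume : Measure E2).toSphere Set.univ).toReal + 1) * (1/(2*π^2))
        * Real.log ((1 + t) / (1 + s))) := by
  set b : ℝ := (4*(1+t))⁻¹ with hbdef
  set a : ℝ := (4*(1+s))⁻¹ with hadef
  have h1s : 0 < 1 + s := by linarith
  have h1t : 0 < 1 + t := by linarith
  have hb : 0 < b := by positivity
  have hba : b ≤ a := by
    apply inv_anti₀ (by positivity)
    linarith
  have hab : a / b = (1+t)/(1+s) := by
    rw [hadef, hbdef]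
    field_simp
  set k : ℝ := 1/(4*π^2) with hkdef
  have hk0 : 0 ≤ k := by positivity
  set G : ℝ → ℝ := fun r => k * ((Real.exp (-b*r^2) - Real.exp (-a*r^2))^2 / r^2) with hGdef
  set f : E2 → E2 := fun x => uchi χ t x - uchi χ s x with hfdef
  set C0 : ℝ≥0∞ := (volume : Measure E2).toSphere Set.univ with hC0def
  have hC0ne : C0 ≠ ⊤ := measure_ne_top _ _
  -- step 1 : (eLpNorm f 2)² = ∫⁻ ‖f‖₊²
  have step1 : (eLpNorm f 2 volume) ^ 2 = ∫⁻ x, ((‖f x‖₊ : ℝ≥0∞)) ^ (2:ℝ) := by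
    rw [eLpNorm_eq_lintegral_rpow_enorm_toReal (by norm_num) (by norm_num)]
    rw [← ENNReal.rpow_natCast _ 2, ← ENNReal.rpow_mul]
    norm_num
    rfl
  -- step 2 : pointwise bound
  have step2 : ∫⁻ x, ((‖f x‖₊ : ℝ≥0∞)) ^ (2:ℝ) ≤ ∫⁻ x : E2, ENNReal.ofReal (G ‖x‖) := by
    refine lintegral_mono fun x => ?_
    have h1 : ((‖f x‖₊ : ℝ≥0∞)) ^ (2:ℝ) = ENNReal.ofReal (‖f x‖^2) := by
      rw [show (2:ℝ) = ((2:ℕ):ℝ) by norm_num, ENNReal.rpow_natCast,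
        ← enorm_eq_nnnorm, ← ofReal_norm, ← ENNReal.ofReal_pow (norm_nonneg _)]
    rw [h1]
    refine ENNReal.ofReal_le_ofReal ?_
    exact pointwise_bound χ ρ M hχ t s x
  -- step 3 : radial reduction
  have step3 : ∫⁻ x : E2, ENNReal.ofReal (G ‖x‖)
      = C0 * ∫⁻ r in Set.Ioi (0:ℝ), ENNReal.ofReal r * ENNReal.ofReal (G r) :=
    lintegral_norm_E2 (fun r => ENNReal.ofReal (G r)) (by fun_prop)
  -- step 4 : 1D estimate
  have step4 : ∫⁻ r in Set.Ioi (0:ℝ), ENNReal.ofReal r * ENNReal.ofReal (G r)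
      ≤ ENNReal.ofReal k * ENNReal.ofReal (2 * Real.log (a/b)) := by
    have hcongr : ∫⁻ r in Set.Ioi (0:ℝ), ENNReal.ofReal r * ENNReal.ofReal (G r)
        = ∫⁻ r in Set.Ioi (0:ℝ), ENNReal.ofReal k *
          ENNReal.ofReal ((Real.exp (-b*r^2) - Real.exp (-a*r^2))^2 / r) := by
      refine setLIntegral_congr_fun measurableSet_Ioi
        (fun r hr => ?_)
      have hr0 : (0:ℝ) < r := hr
      rw [← ENNReal.ofReal_mul hr0.le, ← ENNReal.ofReal_mul hk0]
      congr 1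
      rw [hGdef]
      field_simp
    rw [hcongr, lintegral_const_mul' _ _ ENNReal.ofReal_ne_top]
    exact mul_le_mul_right (key1d hb hba) _
  -- combine
  calc (eLpNorm f 2 volume) ^ 2
      ≤ C0 * (ENNReal.ofReal k * ENNReal.ofReal (2 * Real.log (a/b))) := by
        rw [step1]
        refine le_trans step2 ?_
        rw [step3]
        exact mul_le_mul_right step4 _
    _ ≤ ENNReal.ofReal (C0.toReal + 1) *
          ENNReal.ofReal (k * (2 * Real.log (a/b))) := by
        refine mul_le_mul' ?_ ?_
        · conv_lhs => rw [← ENNReal.ofReal_toReal hC0ne]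
          exact ENNReal.ofReal_le_ofReal (by linarith)
        · rw [ENNReal.ofReal_mul hk0]
    _ = ENNReal.ofReal ((C0.toReal + 1) * (1/(2*π^2)) * Real.log ((1+t)/(1+s))) := by
        rw [← ENNReal.ofReal_mul (by positivity), hab]
        congr 1
        rw [hkdef]
        ring

end AuxProofs

section AuxProofs2
open Set

/-- There is `κ₁ > 0`, depending only on `χ`, with
`‖u^χ(·,t) − u^χ(·,s)‖²_{L²(ℝ²)} ≤ κ₁ |log((1+t)/(1+s))|` for all `t, s ≥ 0`. -/
theorem uchi_L2_difference_log_bound (χ : E2 → ℝ) (ρ M : ℝ) (hχ : IsCutoff χ ρ M) :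
    ∃ κ₁ : ℝ, 0 < κ₁ ∧ ∀ t s : ℝ, 0 ≤ t → 0 ≤ s →
      (eLpNorm (fun x => uchi χ t x - uchi χ s x) 2 volume) ^ 2 ≤
        ENNReal.ofReal (κ₁ * |Real.log ((1 + t) / (1 + s))|) := by
  set C0 : ℝ≥0∞ := (volume : Measure E2).toSphere Set.univ with hC0def
  refine ⟨(C0.toReal + 1) * (1/(2*π^2)), by positivity, fun t s ht hs => ?_⟩
  rcases le_total s t with hst | hst
  · have h1s : 0 < 1 + s := by linarith
    have hlam : 1 ≤ (1+t)/(1+s) := (one_le_div h1s).2 (by linarith)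
    rw [abs_of_nonneg (Real.log_nonneg hlam)]
    exact main_ineq χ ρ M hχ t s hs hst
  · have h1t : 0 < 1 + t := by linarith
    have h1s : 0 < 1 + s := by linarith
    have hneg : (fun x => uchi χ t x - uchi χ s x) = fun x => -(uchi χ s x - uchi χ t x) := by
      funext x; abel
    have hlog : Real.log ((1+t)/(1+s)) = - Real.log ((1+s)/(1+t)) := by
      rw [← Real.log_inv, inv_div]
    have hlam : 1 ≤ (1+s)/(1+t) := (one_le_div h1t).2 (by linarith)
    rw [hneg, show (fun x => -(uchi χ s x - uchi χ t x))
        = -(fun x => uchi χ s x - uchi χ t x) from rfl, eLpNorm_neg,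
      hlog, abs_neg, abs_of_nonneg (Real.log_nonneg hlam)]
    exact main_ineq χ ρ M hχ s t ht hst

end AuxProofs2

end
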